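/- Let S be a nonempty set, (G, ·, d) a group equipped with a metric d invariant under left translations, φ : S → S, g : S → G, and let Φ : S → ℝ≥0 satisfy lim_{n→∞} Φ(φⁿ(x)) = 0 for every x ∈ S. Suppose f, f₁, f₂ : S → G are such that f₁ and f₂ both satisfy the functional equation h(φ(x)) = g(x)·h(x) for all x ∈ S, and d(f(x), f₁(x)) ≤ Φ(x) and d(f(x), f₂(x)) ≤ Φ(x) for all x ∈ S. Then f₁ = f₂. -/
import Mathlib


theorem uniqueness_linear_functional_equation
    {S G : Type*} [Nonempty S] [Group G] [MetricSpace G]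
    (hinv : ∀ x y z : G, dist (x * y) (x * z) = dist y z)
    (φ : S → S) (g : S → G) (Φ : S → NNReal)
    (hΦ : ∀ x : S,
      Filter.Tendsto (fun n : ℕ => Φ (φ^[n] x)) Filter.atTop (nhds 0))
    (f f₁ f₂ : S → G)
    (h₁ : ∀ x : S, f₁ (φ x) = g x * f₁ x)
    (h₂ : ∀ x : S, f₂ (φ x) = g x * f₂ x)
    (hd₁ : ∀ x : S, dist (f x) (f₁ x) ≤ Φ x)
    (hd₂ : ∀ x : S, dist (f x) (f₂ x) ≤ Φ x) :
    f₁ = f₂ := by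
  funext x
  have key : ∀ n : ℕ, dist (f₁ x) (f₂ x) = dist (f₁ (φ^[n] x)) (f₂ (φ^[n] x)) := by
    intro n
    induction n with
    | zero => simp
    | succ n ih =>
      rw [ih, Function.iterate_succ_apply', h₁, h₂, hinv]
  have hle : ∀ n : ℕ, dist (f₁ x) (f₂ x) ≤ 2 * (Φ (φ^[n] x) : ℝ) := by
    intro n
    rw [key n]
    calc dist (f₁ (φ^[n] x)) (f₂ (φ^[n] x))
        ≤ dist (f₁ (φ^[n] x)) (f (φ^[n] x)) + dist (f (φ^[n] x)) (f₂ (φ^[n] x)) :=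
          dist_triangle _ _ _
      _ ≤ Φ (φ^[n] x) + Φ (φ^[n] x) := by
          rw [dist_comm (f₁ _)]
          exact add_le_add (hd₁ _) (hd₂ _)
      _ = 2 * (Φ (φ^[n] x) : ℝ) := by ring
  have hlim : Filter.Tendsto (fun n : ℕ => 2 * (Φ (φ^[n] x) : ℝ)) Filter.atTop (nhds 0) := by
    have := (NNReal.tendsto_coe.2 (hΦ x)).const_mul 2
    simpa using this
  have : dist (f₁ x) (f₂ x) ≤ 0 := ge_of_tendsto hlim (Filter.Eventually.of_forall hle)
  exact dist_le_zero.mp this
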